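/- Let g(x,y,ρ) be as above with -1 < ρ < 1. Then |∂g/∂x (x,y,ρ)| = 4φ(x)·|Φ((y-ρx)/√(1-ρ²)) - Φ(y)| ≤ |ρ| for all x, y. -/

import Mathlib

open MeasureTheory Real

noncomputable def stdphi (x : ℝ) : ℝ := Real.exp (-x ^ 2 / 2) / Real.sqrt (2 * Real.pi)

noncomputable def stdPhi (x : ℝ) : ℝ := ∫ t in Set.Iic x, stdphi t

noncomputable def g (x y ρ : ℝ) : ℝ :=
  2 * ∫ u, Real.sign (x - u) * stdphi u *
      (stdPhi ((y - ρ * u) / Real.sqrt (1 - ρ ^ 2)) - stdPhi y)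

/-!
Since `∫ sign (t - u) h(u) du = 2 ∫_{u ≤ t} h - ∫ h`, its derivative in `t` is `2 h(t)`, which
gives the formula for `∂g/∂x`. For the bound, with `w = y - ρx` and `s = √(1 - ρ²)`, split
`Φ(w/s) - Φ(y)` at `Φ(w)`: the first difference is at most `(1 - s)/2 ≤ |ρ|/2` by concavity of
`Φ` on `[0, ∞)` and its symmetry, the second at most `|ρx|/√(2π)` since `φ ≤ 1/√(2π)`. It
remains that `4φ(x)(|x|/√(2π) + 1/2) ≤ 1`.
-/

open Set ProbabilityTheory

section SignKernel

variable {E : Type*} [NormedAddCommGroup E] [NormedSpace ℝ E] {f : ℝ → E}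

theorem hasDerivAt_setIntegral_Iic [CompleteSpace E] (hf : Continuous f) (hfi : Integrable f)
    (x : ℝ) :
    HasDerivAt (fun t => ∫ u in Iic t, f u) (f x) x := by
  have hsplit :
      (fun t => ∫ u in Iic t, f u) = fun t => (∫ u in Iic 0, f u) + ∫ u in 0..t, f u := by
    funext t
    rw [← intervalIntegral.integral_Iic_sub_Iic hfi.integrableOn hfi.integrableOn, add_sub_cancel]
  rw [hsplit]
  exact (hf.integral_hasStrictDerivAt 0 x).hasDerivAt.const_add _

theorem integral_sign_sub_smul (hfi : Integrable f) (t : ℝ) :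
    ∫ u, Real.sign (t - u) • f u = (2 : ℝ) • (∫ u in Iic t, f u) - ∫ u, f u := by
  have hsign : (fun u => Real.sign (t - u) • f u) =ᵐ[volume]
      fun u => (2 : ℝ) • (Iic t).indicator f u - f u := by
    filter_upwards [measure_eq_zero_iff_ae_notMem.1 (measure_singleton t)] with u hu
    rcases lt_or_gt_of_ne hu with hlt | hgt
    · rw [Real.sign_of_pos (sub_pos.2 hlt), indicator_of_mem (mem_Iic.2 hlt.le)]
      module
    · rw [Real.sign_of_neg (sub_neg.2 hgt), indicator_of_notMem (notMem_Iic.2 hgt)]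
      module
  have h2fi : Integrable (fun u => (2 : ℝ) • (Iic t).indicator f u) :=
    (hfi.indicator (s := Iic t) measurableSet_Iic).smul (2 : ℝ)
  rw [integral_congr_ae hsign, integral_sub h2fi hfi, integral_smul,
    integral_indicator measurableSet_Iic]

theorem hasDerivAt_integral_sign_sub_smul [CompleteSpace E] (hf : Continuous f)
    (hfi : Integrable f) (x : ℝ) :
    HasDerivAt (fun t => ∫ u, Real.sign (t - u) • f u) ((2 : ℝ) • f x) x := by
  simp_rw [integral_sign_sub_smul hfi]
  exact ((hasDerivAt_setIntegral_Iic hf hfi x).const_smul (2 : ℝ)).sub_const _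

end SignKernel

theorem stdphi_eq_gaussianPDFReal : stdphi = gaussianPDFReal 0 1 := by
  ext x
  simp [stdphi, gaussianPDFReal, div_eq_inv_mul]

theorem stdphi_nonneg (x : ℝ) : 0 ≤ stdphi x := by
  rw [stdphi_eq_gaussianPDFReal]; exact gaussianPDFReal_nonneg 0 1 x

theorem continuous_stdphi : Continuous stdphi := by
  unfold stdphi; fun_prop

theorem integrable_stdphi : Integrable stdphi := by
  rw [stdphi_eq_gaussianPDFReal]; exact integrable_gaussianPDFReal 0 1

theorem integral_stdphi : ∫ u, stdphi u = 1 := by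
  rw [stdphi_eq_gaussianPDFReal]; exact integral_gaussianPDFReal_eq_one 0 one_ne_zero

theorem stdphi_neg (x : ℝ) : stdphi (-x) = stdphi x := by
  simp [stdphi]

theorem stdphi_le (x : ℝ) : stdphi x ≤ (√(2 * π))⁻¹ := by
  rw [stdphi, div_eq_mul_inv]
  refine mul_le_of_le_one_left (by positivity) (exp_le_one_iff.2 ?_)
  nlinarith [sq_nonneg x]

theorem antitoneOn_stdphi : AntitoneOn stdphi (Ici 0) := by
  intro a ha b _ hab
  unfold stdphi
  gcongr

theorem hasDerivAt_stdPhi (x : ℝ) : HasDerivAt stdPhi (stdphi x) x :=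
  hasDerivAt_setIntegral_Iic continuous_stdphi integrable_stdphi x

theorem continuous_stdPhi : Continuous stdPhi :=
  continuous_iff_continuousAt.2 fun x => (hasDerivAt_stdPhi x).continuousAt

theorem monotone_stdPhi : Monotone stdPhi :=
  monotone_of_hasDerivAt_nonneg hasDerivAt_stdPhi stdphi_nonneg

theorem stdPhi_nonneg (x : ℝ) : 0 ≤ stdPhi x :=
  setIntegral_nonneg measurableSet_Iic fun u _ => stdphi_nonneg u

theorem stdPhi_le_one (x : ℝ) : stdPhi x ≤ 1 :=
  integral_stdphi ▸ setIntegral_le_integral integrable_stdphi (.of_forall stdphi_nonneg)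

theorem abs_stdPhi_sub_le_one (a b : ℝ) : |stdPhi a - stdPhi b| ≤ 1 :=
  abs_sub_le_iff.2 ⟨by linarith [stdPhi_le_one a, stdPhi_nonneg b],
    by linarith [stdPhi_le_one b, stdPhi_nonneg a]⟩

theorem stdPhi_neg (x : ℝ) : stdPhi (-x) = 1 - stdPhi x := by
  have hIoi : stdPhi (-x) = ∫ t in Ioi x, stdphi t := by
    rw [← neg_neg x, ← integral_comp_neg_Iic, neg_neg]
    simp only [stdPhi, stdphi_neg]
  rw [hIoi, ← integral_stdphi, ← intervalIntegral.integral_Iic_add_Ioi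
    integrable_stdphi.integrableOn integrable_stdphi.integrableOn, stdPhi, add_sub_cancel_left]

theorem stdPhi_zero : stdPhi 0 = 1 / 2 := by
  linarith [neg_zero (G := ℝ) ▸ stdPhi_neg 0]

theorem abs_stdPhi_sub_le (a b : ℝ) : |stdPhi a - stdPhi b| ≤ (√(2 * π))⁻¹ * |a - b| :=
  convex_univ.norm_image_sub_le_of_norm_hasDerivWithin_le
    (fun x _ => (hasDerivAt_stdPhi x).hasDerivWithinAt)
    (fun x _ => by rw [Real.norm_of_nonneg (stdphi_nonneg x)]; exact stdphi_le x)
    (mem_univ b) (mem_univ a)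

theorem concaveOn_stdPhi : ConcaveOn ℝ (Ici 0) stdPhi := by
  have hderiv : deriv stdPhi = stdphi := funext fun x => (hasDerivAt_stdPhi x).deriv
  refine AntitoneOn.concaveOn_of_deriv (convex_Ici 0) continuous_stdPhi.continuousOn
    (fun x _ => (hasDerivAt_stdPhi x).differentiableAt.differentiableWithinAt) ?_
  rw [hderiv, interior_Ici]
  exact antitoneOn_stdphi.mono Ioi_subset_Ici_self

theorem abs_stdPhi_sub_stdPhi_mul_le {s : ℝ} (hs0 : 0 ≤ s) (hs1 : s ≤ 1) (z : ℝ) :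
    |stdPhi z - stdPhi (s * z)| ≤ (1 - s) / 2 := by
  wlog hz : 0 ≤ z generalizing z
  · have hneg := this (-z) (by linarith)
    rwa [mul_neg, stdPhi_neg, stdPhi_neg, ← abs_neg, neg_sub, sub_sub_sub_cancel_left] at hneg
  rw [abs_of_nonneg (sub_nonneg.2 (monotone_stdPhi (mul_le_of_le_one_left hz hs1)))]
  have hconc := concaveOn_stdPhi.2 (mem_Ici.2 hz) (mem_Ici.2 le_rfl) hs0 (sub_nonneg.2 hs1)
    (add_sub_cancel s 1)
  simp only [smul_eq_mul, mul_zero, add_zero, stdPhi_zero] at hconc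
  -- concavity through `0` and `z`: `Φ z - Φ (s z) ≤ (1 - s) (Φ z - 1/2)`
  nlinarith [stdPhi_le_one z]

theorem abs_stdPhi_sub_le_abs_mul {ρ : ℝ} (h1 : -1 < ρ) (h2 : ρ < 1) (x y : ℝ) :
    |stdPhi ((y - ρ * x) / √(1 - ρ ^ 2)) - stdPhi y| ≤ |ρ| * ((√(2 * π))⁻¹ * |x| + 1 / 2) := by
  set s := √(1 - ρ ^ 2)
  have hs0 : 0 < s := sqrt_pos.2 (by nlinarith)
  have hs_sq : s ^ 2 = 1 - ρ ^ 2 := sq_sqrt (by nlinarith)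
  have hs1 : s ≤ 1 := by nlinarith
  have h1s : 1 - s ≤ |ρ| := by nlinarith [abs_nonneg ρ, sq_abs ρ, abs_lt.2 ⟨h1, h2⟩]
  have hshrink := abs_stdPhi_sub_stdPhi_mul_le hs0.le hs1 ((y - ρ * x) / s)
  rw [mul_div_cancel₀ _ hs0.ne'] at hshrink
  calc |stdPhi ((y - ρ * x) / s) - stdPhi y|
      ≤ |stdPhi ((y - ρ * x) / s) - stdPhi (y - ρ * x)| + |stdPhi (y - ρ * x) - stdPhi y| :=
        abs_sub_le _ _ _
    _ ≤ (1 - s) / 2 + (√(2 * π))⁻¹ * |y - ρ * x - y| :=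
        add_le_add hshrink (abs_stdPhi_sub_le _ _)
    _ ≤ |ρ| * ((√(2 * π))⁻¹ * |x| + 1 / 2) := by
        rw [sub_sub_cancel_left, abs_neg, abs_mul]
        nlinarith [inv_nonneg.2 (sqrt_nonneg (2 * π)), abs_nonneg x, abs_nonneg ρ]

theorem four_mul_stdphi_mul_le_one (x : ℝ) :
    4 * stdphi x * ((√(2 * π))⁻¹ * |x| + 1 / 2) ≤ 1 := by
  set c := (√(2 * π))⁻¹
  have hc0 : 0 < c := by positivity
  have hc2 : c ^ 2 * (2 * π) = 1 := by
    rw [inv_pow, sq_sqrt (by positivity), inv_mul_cancel₀ (by positivity)]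
  have hπ := pi_gt_d2
  -- `4 c² = 2/π < 0.637` and `2c < 0.8`; compare with `exp (x²/2) ≥ 1 + x²/2 + x⁴/8`
  have hpoly : 4 * c ^ 2 * |x| + 2 * c ≤ 1 + x ^ 2 / 2 + (x ^ 2 / 2) ^ 2 / 2 := by
    have hc : c < 0.4 := by nlinarith
    have hc2' : 4 * c ^ 2 ≤ 0.637 := by nlinarith
    rw [← sq_abs x]
    nlinarith [abs_nonneg x, sq_nonneg (|x| - 0.6), sq_nonneg (|x| ^ 2 - 0.36)]
  have hphi : stdphi x = c / exp (x ^ 2 / 2) := by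
    rw [stdphi, neg_div, exp_neg]; ring
  calc 4 * stdphi x * (c * |x| + 1 / 2) = (4 * c ^ 2 * |x| + 2 * c) / exp (x ^ 2 / 2) := by
        rw [hphi]; ring
    _ ≤ 1 := (div_le_one (exp_pos _)).2 (hpoly.trans (quadratic_le_exp_of_nonneg (by positivity)))

theorem hasDerivAt_g (x y ρ : ℝ) :
    HasDerivAt (fun t => g t y ρ)
      (4 * stdphi x * (stdPhi ((y - ρ * x) / √(1 - ρ ^ 2)) - stdPhi y)) x := by
  set h : ℝ → ℝ := fun u => stdphi u * (stdPhi ((y - ρ * u) / √(1 - ρ ^ 2)) - stdPhi y)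
  have hcont : Continuous h :=
    continuous_stdphi.mul ((continuous_stdPhi.comp (by fun_prop)).sub continuous_const)
  have hint : Integrable h :=
    integrable_stdphi.mul_bdd
      ((continuous_stdPhi.comp (by fun_prop)).sub continuous_const).aestronglyMeasurable
      (.of_forall fun u => abs_stdPhi_sub_le_one _ _)
  have hg : (fun t => g t y ρ) = fun t => 2 * ∫ u, Real.sign (t - u) • h u := by
    funext t
    simp only [g, h, smul_eq_mul, mul_assoc]
  rw [hg]
  refine ((hasDerivAt_integral_sign_sub_smul hcont hint x).const_mul 2).congr_deriv ?_
  simp only [h, smul_eq_mul]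
  ring

theorem stmt14 (ρ : ℝ) (h1 : -1 < ρ) (h2 : ρ < 1) (x y : ℝ) :
    HasDerivAt (fun t => g t y ρ)
      (4 * stdphi x * (stdPhi ((y - ρ * x) / Real.sqrt (1 - ρ ^ 2)) - stdPhi y)) x ∧
    |4 * stdphi x * (stdPhi ((y - ρ * x) / Real.sqrt (1 - ρ ^ 2)) - stdPhi y)| ≤ |ρ| := by
  refine ⟨hasDerivAt_g x y ρ, ?_⟩
  have hphi : 0 ≤ 4 * stdphi x := by linarith [stdphi_nonneg x]
  calc |4 * stdphi x * (stdPhi ((y - ρ * x) / √(1 - ρ ^ 2)) - stdPhi y)|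
      = 4 * stdphi x * |stdPhi ((y - ρ * x) / √(1 - ρ ^ 2)) - stdPhi y| := by
        rw [abs_mul, abs_of_nonneg hphi]
    _ ≤ 4 * stdphi x * (|ρ| * ((√(2 * π))⁻¹ * |x| + 1 / 2)) := by
        gcongr; exact abs_stdPhi_sub_le_abs_mul h1 h2 x y
    _ = |ρ| * (4 * stdphi x * ((√(2 * π))⁻¹ * |x| + 1 / 2)) := by ring
    _ ≤ |ρ| := mul_le_of_le_one_right (abs_nonneg ρ) (four_mul_stdphi_mul_le_one x)
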